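/- Let ρ_{00} = (𝟙 + (σx+σz)/√2)/2, ρ_{11} = (𝟙 − (σx+σz)/√2)/2, ρ_{01} = (𝟙 + (σx−σz)/√2)/2, ρ_{10} = (𝟙 − (σx−σz)/√2)/2, let M_{b|0} = (𝟙 + (−1)^b σx)/2 and M_{b|1} = (𝟙 + (−1)^b σz)/2, and let Λ(ρ) = (1/4)·(2ρ + σx·ρ·σx + σz·ρ·σz). Then for every integer k ≥ 1, the random access code value of the k-th sequential observer is W_k = (1/8)·Σ_{x∈{0,1}², y∈{0,1}} tr[Λ^{k−1}(ρ_x)·M_{x_y|y}] = (1/2)·(1 + √2/2^k), where Λ^{k−1} denotes the (k−1)-fold iterate of Λ. -/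
import Mathlib


open Matrix

noncomputable section

/-- The bit `x_y` of `x = (x₀, x₁)`. -/
def bit (x : Bool × Bool) (y : Bool) : Bool := if y then x.2 else x.1

/-- Pauli matrix σx. -/
def sigmaX : Matrix (Fin 2) (Fin 2) ℂ := !![0, 1; 1, 0]

/-- Pauli matrix σz. -/
def sigmaZ : Matrix (Fin 2) (Fin 2) ℂ := !![1, 0; 0, -1]

/-- Alice's optimal preparations: a square in the x–z disk of the Bloch
sphere. -/
def rhoOpt : Bool × Bool → Matrix (Fin 2) (Fin 2) ℂ
  | (false, false) => (1 / 2 : ℂ) • (1 + ((Real.sqrt 2 : ℂ))⁻¹ • (sigmaX + sigmaZ))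
  | (true, true) => (1 / 2 : ℂ) • (1 - ((Real.sqrt 2 : ℂ))⁻¹ • (sigmaX + sigmaZ))
  | (false, true) => (1 / 2 : ℂ) • (1 + ((Real.sqrt 2 : ℂ))⁻¹ • (sigmaX - sigmaZ))
  | (true, false) => (1 / 2 : ℂ) • (1 - ((Real.sqrt 2 : ℂ))⁻¹ • (sigmaX - sigmaZ))

/-- Sharp measurement elements `M_{b|0} = (𝟙 + (−1)^b σx)/2`,
`M_{b|1} = (𝟙 + (−1)^b σz)/2`. -/
def Msharp (y b : Bool) : Matrix (Fin 2) (Fin 2) ℂ :=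
  (1 / 2 : ℂ) • (1 + (if b then (-1 : ℂ) else 1) • (if y then sigmaZ else sigmaX))

/-- The averaged Lüders channel of sharp σx- and σz-measurements,
`Λ(ρ) = (1/4)(2ρ + σx ρ σx + σz ρ σz)`. -/
def Lam (ρ : Matrix (Fin 2) (Fin 2) ℂ) : Matrix (Fin 2) (Fin 2) ℂ :=
  (1 / 4 : ℂ) • (2 • ρ + sigmaX * ρ * sigmaX + sigmaZ * ρ * sigmaZ)

/-- The RAC value of the `k`-th sequential observer, all measuring sharply
along σx and σz, is `W_k = (1/2)(1 + √2/2^k)`. -/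

def exc (x : Bool × Bool) : ℂ :=
  if x.1 then -((Real.sqrt 2 : ℂ))⁻¹ else ((Real.sqrt 2 : ℂ))⁻¹
def ezc (x : Bool × Bool) : ℂ :=
  if x.2 then -((Real.sqrt 2 : ℂ))⁻¹ else ((Real.sqrt 2 : ℂ))⁻¹

lemma rho_eq (x : Bool × Bool) :
    rhoOpt x = (1/2 : ℂ) • (1 + exc x • sigmaX + ezc x • sigmaZ) := by
  rcases x with ⟨x1, x2⟩
  cases x1 <;> cases x2 <;>
    · ext i j
      fin_cases i <;> fin_cases j <;>
        simp [rhoOpt, exc, ezc, sigmaX, sigmaZ, Matrix.one_apply] <;> ring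

lemma lam_key (a b : ℂ) :
    Lam ((1/2 : ℂ) • (1 + a • sigmaX + b • sigmaZ))
      = (1/2 : ℂ) • (1 + (a/2) • sigmaX + (b/2) • sigmaZ) := by
  ext i j
  fin_cases i <;> fin_cases j <;>
    simp [Lam, two_smul, sigmaX, sigmaZ, Matrix.mul_apply, Fin.sum_univ_two,
      Matrix.one_apply, Matrix.vecMul, dotProduct] <;>
    ring

lemma lam_iter (a b : ℂ) (n : ℕ) :
    Lam^[n] ((1/2 : ℂ) • (1 + a • sigmaX + b • sigmaZ))
      = (1/2 : ℂ) • (1 + (a/2^n) • sigmaX + (b/2^n) • sigmaZ) := by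
  induction n with
  | zero => simp
  | succ n ih =>
      rw [Function.iterate_succ_apply', ih, lam_key]
      ring_nf

theorem sequential_rac_value (k : ℕ) (hk : 1 ≤ k) :
    (1 / 8 : ℝ) * ∑ x : Bool × Bool, ∑ y : Bool,
        ((Lam^[k - 1] (rhoOpt x) * Msharp y (bit x y)).trace).re =
      (1 / 2) * (1 + Real.sqrt 2 / 2 ^ k) := by
  obtain ⟨n, rfl⟩ : ∃ n, k = n + 1 := ⟨k - 1, (Nat.succ_pred_eq_of_pos hk).symm⟩
  simp only [Nat.add_sub_cancel]
  have hs : ((Real.sqrt 2 : ℝ) : ℂ) * ((Real.sqrt 2 : ℝ) : ℂ) = 2 := by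
    norm_cast
    rw [Real.mul_self_sqrt (by norm_num)]
  have hs0 : ((Real.sqrt 2 : ℝ) : ℂ) ≠ 0 := by
    simp [Real.sqrt_eq_zero']
  have h2 : ((2:ℂ)^n) ≠ 0 := pow_ne_zero _ two_ne_zero
  have hterm : ∀ x : Bool × Bool, ∀ y : Bool,
      ((Lam^[n] (rhoOpt x) * Msharp y (bit x y)).trace).re
        = 1/2 * (1 + Real.sqrt 2 / 2 ^ (n+1)) := by
    intro x y
    rw [rho_eq, lam_iter]
    have key : ((1/2 : ℂ) • (1 + (exc x/2^n) • sigmaX + (ezc x/2^n) • sigmaZ)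
          * Msharp y (bit x y)).trace
        = ((1/2 * (1 + Real.sqrt 2 / 2 ^ (n+1)) : ℝ) : ℂ) := by
      rcases x with ⟨x1, x2⟩
      cases x1 <;> cases x2 <;> cases y <;>
        · simp [Msharp, bit, exc, ezc, sigmaX, sigmaZ, Matrix.trace_fin_two,
            Matrix.mul_apply, Fin.sum_univ_two, Matrix.one_apply]
          have hinv : ((Real.sqrt 2 : ℝ) : ℂ)⁻¹ = ((Real.sqrt 2 : ℝ) : ℂ) / 2 := by
            field_simp
            linear_combination -hs
          rw [hinv]
          ring
    rw [key, Complex.ofReal_re]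
  rw [Finset.sum_congr rfl fun x _ => Finset.sum_congr rfl fun y _ => hterm x y]
  simp [Finset.sum_const]
  ring

end
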